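/- Let p \equiv 1 (mod 4) be prime, \lambda in F_p \ {0,1} a nonzero square, and t in F_p with t^2 = \lambda and t \ne \pm 1. Then the curve W_\lambda : y^2 = x^3 + 2(1+\lambda)x^2 + (1-\lambda)^2 x is isomorphic over F_p to the Legendre curve E_\psi : y^2 = x(x-1)(x-\psi) with \psi = ((1-t)/(1+t))^2, via the change of variables (x,y) -> (u^2 x, u^3 y) with u^2 = -(1+t)^2. -/

import Mathlib

/-- The Legendre curve `y² = x(x - 1)(x - λ)` in Weierstrass form. -/
def legendreCurve (K : Type*) [Field K] (lam : K) : WeierstrassCurve K :=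
  { a₁ := 0, a₂ := -(1 + lam), a₃ := 0, a₄ := lam, a₆ := 0 }

/-- The curve `y² = x³ + 2(1+λ)x² + (1-λ)²x`, which is 2-isogenous to the Legendre curve. -/
def isogenousCurve (K : Type*) [Field K] (lam : K) : WeierstrassCurve K :=
  { a₁ := 0, a₂ := 2 * (1 + lam), a₃ := 0, a₄ := (1 - lam) ^ 2, a₆ := 0 }

open WeierstrassCurve in
theorem isogenousCurve_sq_scale_eq_legendreCurve {K : Type*} [Field K] {t : K} (ht : 1 + t ≠ 0)
    (u : Kˣ) (hu : (u : K) ^ 2 = -(1 + t) ^ 2) :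
    (⟨u, 0, 0, 0⟩ : VariableChange K) • isogenousCurve K (t ^ 2) =
      legendreCurve K (((1 - t) / (1 + t)) ^ 2) := by
  have hu_inv : ((u⁻¹ : Kˣ) : K) ^ 2 = -((1 + t) ^ 2)⁻¹ := by
    rw [Units.val_inv_eq_inv_val, inv_pow, hu, inv_neg]
  have hu_inv4 : ((u⁻¹ : Kˣ) : K) ^ 4 = ((1 + t) ^ 2)⁻¹ ^ 2 := by
    rw [show (4 : ℕ) = 2 * 2 from rfl, pow_mul, hu_inv, neg_sq]
  -- `2(1 + t²) = (1 + t)² + (1 - t)²` and `(1 - t²)² = (1 + t)²(1 - t)²`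
  ext
  · simp [variableChange_a₁, isogenousCurve, legendreCurve]
  · simp only [variableChange_a₂, isogenousCurve, legendreCurve, hu_inv]
    field_simp
    ring
  · simp [variableChange_a₃, isogenousCurve, legendreCurve]
  · simp only [variableChange_a₄, isogenousCurve, legendreCurve, hu_inv4]
    field_simp
    ring
  · simp [variableChange_a₆, isogenousCurve, legendreCurve]

theorem stmt_16_general (p : ℕ) [Fact p.Prime] (lam : ZMod p)
    (t : ZMod p) (ht : t ^ 2 = lam)
    (ht1' : t ≠ -1) (u : (ZMod p)ˣ) (hu : (u : ZMod p) ^ 2 = -(1 + t) ^ 2) :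
    (⟨u, 0, 0, 0⟩ : WeierstrassCurve.VariableChange (ZMod p)) • isogenousCurve (ZMod p) lam =
      legendreCurve (ZMod p) (((1 - t) / (1 + t)) ^ 2) := by
  have h1t : 1 + t ≠ 0 := fun h => ht1' (eq_neg_of_add_eq_zero_right h)
  subst ht
  exact isogenousCurve_sq_scale_eq_legendreCurve h1t u hu

theorem stmt_16 (p : ℕ) [Fact p.Prime] (hp : p % 4 = 1) (lam : ZMod p)
    (h0 : lam ≠ 0) (h1 : lam ≠ 1) (t : ZMod p) (ht : t ^ 2 = lam)
    (ht1 : t ≠ 1) (ht1' : t ≠ -1) (u : (ZMod p)ˣ) (hu : (u : ZMod p) ^ 2 = -(1 + t) ^ 2) :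
    (⟨u, 0, 0, 0⟩ : WeierstrassCurve.VariableChange (ZMod p)) • isogenousCurve (ZMod p) lam =
      legendreCurve (ZMod p) (((1 - t) / (1 + t)) ^ 2) :=
  stmt_16_general p lam t ht ht1' u hu
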